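/- For every 0 < ε < 1, every finite set X of m points in ℝ^N, and every natural number n with n > 8·ln(m)/ε², there exists a linear map f : ℝ^N → ℝ^n such that for all u, v ∈ X: (1−ε)·‖u−v‖ ≤ ‖f(u)−f(v)‖ ≤ (1+ε)·‖u−v‖. -/

import Mathlib

/-!
Let `ω 0, …, ω (n-1)` be independent standard Gaussian vectors and `f x = n^(-1/2) (⟪ω i, x⟫)ᵢ`.
For a unit vector `D` the `⟪D, ω i⟫` are independent standard Gaussians, so `n ‖f D‖²` is
chi-squared with `n` degrees of freedom and has moment generating function `(1 - 2t)^(-n/2)`.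
Chernoff's bound then gives each of `‖f D‖ < 1 - ε` and `‖f D‖ > 1 + ε` probability at most
`exp (-n ε² / 2)`, which is below `m⁻⁴` because `n ε² > 8 log m`. A union bound over the fewer than
`m²` differences of distinct points of `X` leaves an `ω` for which `f` distorts none of them.
-/

open MeasureTheory ProbabilityTheory Real
open scoped RealInnerProductSpace

namespace JohnsonLindenstrauss

/-- For `t ≥ 1 / 2` both sides are junk zeros: `exp (t * x ^ 2)` is not integrable and the
square root of a negative number is `0`. -/
lemma mgf_sq_gaussianReal (t : ℝ) :
    mgf (· ^ 2) (gaussianReal 0 1) t = (√(1 - 2 * t))⁻¹ := by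
  have hdensity : ∀ x : ℝ, gaussianPDFReal 0 1 x • exp (t * x ^ 2)
      = (√(2 * π))⁻¹ * exp (-(1 / 2 - t) * x ^ 2) := fun x => by
    rw [gaussianPDFReal, smul_eq_mul, mul_assoc, ← exp_add]
    congr 2 <;> simp; ring
  rw [mgf, integral_gaussianReal_eq_integral_smul one_ne_zero]
  simp_rw [hdensity]
  rw [integral_const_mul, integral_gaussian, ← sqrt_inv, ← sqrt_mul (by positivity), ← sqrt_inv]
  congr 1
  field_simp

section ChiSquaredTails

variable {Ω : Type*} {mΩ : MeasurableSpace Ω} {μ : Measure Ω} {Y : Ω → ℝ} {n : ℕ}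

def HasChiSquaredMgf (Y : Ω → ℝ) (μ : Measure Ω) (n : ℕ) : Prop :=
  ∀ t < 1 / 2, mgf Y μ t = (√(1 - 2 * t))⁻¹ ^ n

lemma HasChiSquaredMgf.integrable_exp_mul [NeZero μ] (hY : HasChiSquaredMgf Y μ n)
    {t : ℝ} (ht : t < 1 / 2) : Integrable (fun ω => exp (t * Y ω)) μ := by
  have : 0 < 1 - 2 * t := by linarith
  exact mgf_pos_iff.mp (by rw [hY t ht]; positivity)

/-- The value of `t` minimises the Chernoff bound `exp (-t a) * mgf Y μ t` at `a = (1 + δ) ^ 2 * n`;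
then `(1 + δ) ^ n ≤ exp (n δ)` absorbs the linear term of the exponent. -/
lemma HasChiSquaredMgf.exp_mul_mgf_le (hY : HasChiSquaredMgf Y μ n)
    {δ t : ℝ} (hδ : -1 < δ) (ht : 1 - 2 * t = ((1 + δ) ^ 2)⁻¹) :
    exp (-t * ((1 + δ) ^ 2 * n)) * mgf Y μ t ≤ exp (-(n * δ ^ 2 / 2)) := by
  have hδ' : 0 < 1 + δ := by linarith
  have hmgf : mgf Y μ t = (1 + δ) ^ n := by
    rw [hY t (by nlinarith [inv_pos.mpr (pow_pos hδ' 2)]), ht, sqrt_inv, sqrt_sq hδ'.le,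
      inv_inv]
  have hexp : -t * ((1 + δ) ^ 2 * n) = -(n * δ ^ 2 / 2) - n * δ := by
    have : t = (1 - ((1 + δ) ^ 2)⁻¹) / 2 := by linarith
    subst this
    field_simp
    ring
  calc exp (-t * ((1 + δ) ^ 2 * n)) * mgf Y μ t
      ≤ exp (-(n * δ ^ 2 / 2) - n * δ) * exp δ ^ n := by
        rw [hmgf, hexp]
        gcongr
        linarith [add_one_le_exp δ]
    _ = exp (-(n * δ ^ 2 / 2)) := by
        rw [← exp_nat_mul, ← exp_add]
        ring_nf

lemma HasChiSquaredMgf.measureReal_ge_le [IsFiniteMeasure μ] [NeZero μ]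
    (hY : HasChiSquaredMgf Y μ n) {ε : ℝ} (hε : 0 ≤ ε) :
    μ.real {ω | (1 + ε) ^ 2 * n ≤ Y ω} ≤ exp (-(n * ε ^ 2 / 2)) := by
  set t := (1 - ((1 + ε) ^ 2)⁻¹) / 2 with ht_def
  have ht0 : 0 ≤ t := by
    have : ((1 + ε) ^ 2)⁻¹ ≤ 1 := inv_le_one_of_one_le₀ (one_le_pow₀ (by linarith))
    linarith [ht_def]
  have ht : 1 - 2 * t = ((1 + ε) ^ 2)⁻¹ := by ring
  refine (measure_ge_le_exp_mul_mgf _ ht0 (hY.integrable_exp_mul ?_)).trans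
    (hY.exp_mul_mgf_le (by linarith) ht)
  nlinarith [inv_pos.mpr (pow_pos (by linarith : (0 : ℝ) < 1 + ε) 2)]

lemma HasChiSquaredMgf.measureReal_le_le [IsFiniteMeasure μ] [NeZero μ]
    (hY : HasChiSquaredMgf Y μ n) {ε : ℝ} (hε0 : 0 ≤ ε) (hε1 : ε < 1) :
    μ.real {ω | Y ω ≤ (1 - ε) ^ 2 * n} ≤ exp (-(n * ε ^ 2 / 2)) := by
  set t := (1 - ((1 + -ε) ^ 2)⁻¹) / 2 with ht_def
  have ht0 : t ≤ 0 := by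
    have : 1 ≤ ((1 + -ε) ^ 2)⁻¹ :=
      one_le_inv₀ (pow_pos (by linarith) 2) |>.mpr (pow_le_one₀ (by linarith) (by linarith))
    linarith [ht_def]
  have ht : 1 - 2 * t = ((1 + -ε) ^ 2)⁻¹ := by ring
  have key := hY.exp_mul_mgf_le (by linarith) ht
  rw [neg_sq, ← sub_eq_add_neg] at key
  exact (measure_le_le_exp_mul_mgf _ ht0 (hY.integrable_exp_mul (by linarith))).trans key

end ChiSquaredTails

variable {E : Type*} [NormedAddCommGroup E] [InnerProductSpace ℝ E] {n : ℕ}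

noncomputable def scaledRowMap (ω : Fin n → E) : E →ₗ[ℝ] EuclideanSpace ℝ (Fin n) :=
  (√n)⁻¹ • ((EuclideanSpace.equiv (Fin n) ℝ).symm.toLinearMap ∘ₗ
    LinearMap.pi fun i => innerₛₗ ℝ (ω i))

lemma norm_scaledRowMap_sq (ω : Fin n → E) (x : E) :
    ‖scaledRowMap ω x‖ ^ 2 = (∑ i, ⟪ω i, x⟫ ^ 2) / n := by
  simp [scaledRowMap, EuclideanSpace.real_norm_sq_eq, mul_pow, ← Finset.mul_sum, div_eq_inv_mul]

variable [FiniteDimensional ℝ E] [MeasurableSpace E] [BorelSpace E]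

lemma map_inner_stdGaussian {D : E} (hD : ‖D‖ = 1) :
    (stdGaussian E).map (fun x => ⟪D, x⟫) = gaussianReal 0 1 := by
  have := IsGaussian.map_eq_gaussianReal (μ := stdGaussian E) (innerSL ℝ D)
  rw [integral_strongDual_stdGaussian, variance_dual_stdGaussian, innerSL_apply_norm, hD] at this
  simpa using this

section

variable {ι : Type*} [Fintype ι]

lemma map_inner_apply_pi_stdGaussian {D : E} (hD : ‖D‖ = 1) (i : ι) :
    (Measure.pi fun _ : ι => stdGaussian E).map (fun ω => ⟪D, ω i⟫) = gaussianReal 0 1 := by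
  change Measure.map ((fun x : E => ⟪D, x⟫) ∘ Function.eval (β := fun _ : ι => E) i) _ = _
  rw [← Measure.map_map (by fun_prop) (by fun_prop), (measurePreserving_eval _ i).map_eq,
    map_inner_stdGaussian hD]

lemma mgf_sum_inner_sq {D : E} (hD : ‖D‖ = 1) (t : ℝ) :
    mgf (fun ω : ι → E => ∑ i, ⟪D, ω i⟫ ^ 2) (Measure.pi fun _ => stdGaussian E) t
      = (√(1 - 2 * t))⁻¹ ^ Fintype.card ι := by
  have hindep := iIndepFun_pi (μ := fun _ : ι => stdGaussian E)
    (X := fun _ x => ⟪D, x⟫ ^ 2) fun _ => by fun_prop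
  have hsum := hindep.mgf_sum (t := t) (fun _ => by fun_prop) Finset.univ
  have hfactor : ∀ i : ι, mgf (fun ω : ι → E => ⟪D, ω i⟫ ^ 2)
      (Measure.pi fun _ => stdGaussian E) t = (√(1 - 2 * t))⁻¹ := fun i => by
    rw [← mgf_sq_gaussianReal, ← map_inner_apply_pi_stdGaussian hD i,
      mgf_map (by fun_prop : Continuous fun ω : ι → E => ⟪D, ω i⟫).aemeasurable (by fun_prop)]
    rfl
  convert hsum using 1
  · congr 1
    ext ω
    simp
  · simp [hfactor]

end

lemma measureReal_distortion_le_of_norm_eq_one {D : E} (hD : ‖D‖ = 1) {ε : ℝ} (hε0 : 0 ≤ ε)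
    (hε1 : ε < 1) :
    (Measure.pi fun _ : Fin n => stdGaussian E).real
        {ω | ¬ (1 - ε ≤ ‖scaledRowMap ω D‖ ∧ ‖scaledRowMap ω D‖ ≤ 1 + ε)}
      ≤ 2 * exp (-(n * ε ^ 2 / 2)) := by
  set Y : (Fin n → E) → ℝ := fun ω => ∑ i, ⟪D, ω i⟫ ^ 2
  have hY : HasChiSquaredMgf Y (Measure.pi fun _ => stdGaussian E) n :=
    fun t _ => by simpa using mgf_sum_inner_sq (ι := Fin n) hD t
  have hsub : {ω | ¬ (1 - ε ≤ ‖scaledRowMap ω D‖ ∧ ‖scaledRowMap ω D‖ ≤ 1 + ε)}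
      ⊆ {ω | Y ω ≤ (1 - ε) ^ 2 * n} ∪ {ω | (1 + ε) ^ 2 * n ≤ Y ω} := by
    intro ω hω
    by_contra h
    simp only [Set.mem_union, Set.mem_ofPred_eq, not_or, not_le] at h
    obtain ⟨hlower, hupper⟩ := h
    have hn : (0 : ℝ) < n := by nlinarith
    have hnorm : ‖scaledRowMap ω D‖ ^ 2 = Y ω / n := by
      simp_rw [norm_scaledRowMap_sq, Y, real_inner_comm]
    refine hω ⟨?_, ?_⟩
    · refine (pow_le_pow_iff_left₀ (by linarith) (norm_nonneg _) two_ne_zero).mp ?_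
      rw [hnorm, le_div_iff₀ hn]
      exact hlower.le
    · refine (pow_le_pow_iff_left₀ (norm_nonneg _) (by linarith) two_ne_zero).mp ?_
      rw [hnorm, div_le_iff₀ hn]
      exact hupper.le
  calc _ ≤ _ := measureReal_mono hsub
    _ ≤ _ := measureReal_union_le _ _
    _ ≤ exp (-(n * ε ^ 2 / 2)) + exp (-(n * ε ^ 2 / 2)) :=
        add_le_add (hY.measureReal_le_le hε0 hε1) (hY.measureReal_ge_le hε0)
    _ = 2 * exp (-(n * ε ^ 2 / 2)) := by ring

lemma measureReal_distortion_le (x : E) {ε : ℝ} (hε0 : 0 ≤ ε) (hε1 : ε < 1) :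
    (Measure.pi fun _ : Fin n => stdGaussian E).real
        {ω | ¬ ((1 - ε) * ‖x‖ ≤ ‖scaledRowMap ω x‖ ∧ ‖scaledRowMap ω x‖ ≤ (1 + ε) * ‖x‖)}
      ≤ 2 * exp (-(n * ε ^ 2 / 2)) := by
  rcases eq_or_ne x 0 with rfl | hx
  · simp only [map_zero, norm_zero, mul_zero, le_refl, and_self, not_true_eq_false,
      Set.ofPred_false, measureReal_empty]
    positivity
  have hpos : 0 < ‖x‖ := norm_pos_iff.mpr hx
  have hD : ‖‖x‖⁻¹ • x‖ = 1 := by rw [norm_smul, norm_inv, norm_norm, inv_mul_cancel₀ hpos.ne']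
  convert measureReal_distortion_le_of_norm_eq_one (n := n) hD hε0 hε1 using 3
  funext ω
  have hscale : ‖scaledRowMap ω x‖ = ‖x‖ * ‖scaledRowMap ω (‖x‖⁻¹ • x)‖ := by
    rw [map_smul, norm_smul, norm_inv, norm_norm, mul_inv_cancel_left₀ hpos.ne']
  rw [hscale, mul_comm (1 - ε), mul_comm (1 + ε), mul_le_mul_iff_right₀ hpos,
    mul_le_mul_iff_right₀ hpos]

lemma natCast_mul_sub_one_mul_exp_lt_one {m n : ℕ} {ε : ℝ} (hε : 0 < ε)
    (hn : (n : ℝ) > 8 * (log m / ε ^ 2)) :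
    (m : ℝ) * (m - 1) * (2 * exp (-(n * ε ^ 2 / 2))) < 1 := by
  rcases Nat.eq_zero_or_pos m with rfl | hm
  · simp
  have hm1 : (1 : ℝ) ≤ m := by exact_mod_cast hm
  have hlog : 8 * log m < n * ε ^ 2 := by
    rwa [gt_iff_lt, mul_div_assoc', div_lt_iff₀ (by positivity)] at hn
  have hexp : exp (-(n * ε ^ 2 / 2)) ≤ ((m : ℝ) ^ 4)⁻¹ := calc
    exp (-(n * ε ^ 2 / 2)) ≤ exp (-log ((m : ℝ) ^ 4)) := by
      rw [exp_le_exp, log_pow]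
      push_cast
      linarith
    _ = ((m : ℝ) ^ 4)⁻¹ := by rw [exp_neg, exp_log (by positivity)]
  calc (m : ℝ) * (m - 1) * (2 * exp (-(n * ε ^ 2 / 2)))
      ≤ m * (m - 1) * (2 * ((m : ℝ) ^ 4)⁻¹) := by
        have : (0 : ℝ) ≤ m - 1 := by linarith
        gcongr
    _ < 1 := by
        rw [← div_eq_mul_inv, mul_div_assoc', div_lt_one (by positivity)]
        nlinarith [sq_nonneg ((m : ℝ) ^ 2 - 1)]

end JohnsonLindenstrauss

open JohnsonLindenstrauss MeasureTheory ProbabilityTheory Real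

/-- Johnson–Lindenstrauss lemma (as stated in the paper, Lemma 1):
for every `0 < ε < 1`, every finite set `X` of `m` points in `ℝ^N`, and every
`n > 8·ln(m)/ε²`, there is a linear map `f : ℝ^N → ℝ^n` such that for all
`u, v ∈ X`, `(1−ε)·‖u−v‖ ≤ ‖f u − f v‖ ≤ (1+ε)·‖u−v‖`. -/
theorem johnson_lindenstrauss
    (N m n : ℕ) (ε : ℝ) (hε0 : 0 < ε) (hε1 : ε < 1)
    (X : Finset (EuclideanSpace ℝ (Fin N))) (hX : X.card = m)
    (hn : (n : ℝ) > 8 * (Real.log m / ε ^ 2)) :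
    ∃ f : EuclideanSpace ℝ (Fin N) →ₗ[ℝ] EuclideanSpace ℝ (Fin n),
      ∀ u ∈ X, ∀ v ∈ X,
        (1 - ε) * ‖u - v‖ ≤ ‖f u - f v‖ ∧ ‖f u - f v‖ ≤ (1 + ε) * ‖u - v‖ := by
  set μ := Measure.pi fun _ : Fin n => stdGaussian (EuclideanSpace ℝ (Fin N))
  set bad := fun x : EuclideanSpace ℝ (Fin N) => {ω : Fin n → EuclideanSpace ℝ (Fin N) |
    ¬ ((1 - ε) * ‖x‖ ≤ ‖scaledRowMap ω x‖ ∧ ‖scaledRowMap ω x‖ ≤ (1 + ε) * ‖x‖)}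
  have hbad : μ.real (⋃ p ∈ X.offDiag, bad (p.1 - p.2)) < 1 := calc
    _ ≤ ∑ p ∈ X.offDiag, μ.real (bad (p.1 - p.2)) := measureReal_biUnion_finset_le _ _
    _ ≤ ∑ p ∈ X.offDiag, 2 * exp (-(n * ε ^ 2 / 2)) :=
        Finset.sum_le_sum fun p _ => measureReal_distortion_le _ hε0.le hε1
    _ = (m : ℝ) * (m - 1) * (2 * exp (-(n * ε ^ 2 / 2))) := by
        rw [Finset.sum_const, Finset.offDiag_card, hX, nsmul_eq_mul,
          Nat.cast_sub (Nat.le_mul_self m)]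
        push_cast
        ring
    _ < 1 := natCast_mul_sub_one_mul_exp_lt_one hε0 hn
  obtain ⟨ω, hω⟩ : (⋃ p ∈ X.offDiag, bad (p.1 - p.2))ᶜ.Nonempty := by
    rw [Set.nonempty_compl]
    rintro huniv
    rw [huniv, probReal_univ] at hbad
    exact lt_irrefl _ hbad
  refine ⟨scaledRowMap ω, fun u hu v hv => ?_⟩
  rw [← map_sub]
  rcases eq_or_ne u v with rfl | huv
  · simp
  · have hgood : ω ∉ bad (u - v) := fun h =>
      hω (Set.mem_biUnion (x := (u, v)) (Finset.mem_offDiag.mpr ⟨hu, hv, huv⟩) h)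
    simpa only [bad, Set.mem_ofPred_eq, not_not] using hgood
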